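/- arXiv:2509.05589 — 8 statements merged into one kernel-verified Lean document; each statement's English description precedes it below -/
import Mathlib

section
/- Let x, y ∈ ℝⁿ with x ≠ y, let λ > 0 and μ ∈ (0,1), and let u, v ∈ ℝⁿ satisfy λ‖u − v‖ ≤ μ‖x − y‖. Set d = (x − y) − λ(u − v) and ρ = ⟨x − y, d⟩ / ‖d‖². Then d ≠ 0 and ρ ≥ (1 − μ)/(1 + μ)². -/
/-! Write `z = x - y` and `w = λ(u - v)`, so `d = z - w` and `‖w‖ ≤ μ‖z‖`. Cauchy–Schwarz gives
`⟪z, d⟫ ≥ (1 - μ)‖z‖² > 0`, which forces `d ≠ 0`, and the triangle inequality gives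
`‖d‖ ≤ (1 + μ)‖z‖`; dividing the first bound by the square of the second bounds `ρ`. -/

open scoped RealInnerProductSpace

theorem norm_sub_le_one_add_mul {E : Type*} [SeminormedAddCommGroup E] {z w : E} {μ : ℝ}
    (hw : ‖w‖ ≤ μ * ‖z‖) : ‖z - w‖ ≤ (1 + μ) * ‖z‖ :=
  calc ‖z - w‖ ≤ ‖z‖ + ‖w‖ := norm_sub_le z w
    _ ≤ (1 + μ) * ‖z‖ := by linarith

section NormLeMul

variable {E : Type*} [NormedAddCommGroup E] [InnerProductSpace ℝ E] {z w : E} {μ : ℝ}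

theorem one_sub_mul_sq_le_inner_sub (hw : ‖w‖ ≤ μ * ‖z‖) :
    (1 - μ) * ‖z‖ ^ 2 ≤ ⟪z, z - w⟫ := by
  have hzw : ⟪z, w⟫ ≤ μ * ‖z‖ ^ 2 :=
    calc ⟪z, w⟫ ≤ ‖z‖ * ‖w‖ := real_inner_le_norm z w
      _ ≤ ‖z‖ * (μ * ‖z‖) := mul_le_mul_of_nonneg_left hw (norm_nonneg z)
      _ = μ * ‖z‖ ^ 2 := by ring
  rw [inner_sub_right, real_inner_self_eq_norm_sq]
  linarith

theorem inner_sub_pos (hz : z ≠ 0) (hμ : μ < 1) (hw : ‖w‖ ≤ μ * ‖z‖) : 0 < ⟪z, z - w⟫ :=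
  (mul_pos (sub_pos.mpr hμ) (by positivity)).trans_le (one_sub_mul_sq_le_inner_sub hw)

theorem sub_ne_zero_of_norm_le_mul (hz : z ≠ 0) (hμ : μ < 1) (hw : ‖w‖ ≤ μ * ‖z‖) :
    z - w ≠ 0 := by
  intro h
  simpa [h] using inner_sub_pos hz hμ hw

theorem one_sub_div_sq_le_inner_div_norm_sq (hz : z ≠ 0) (hμ : μ < 1)
    (hw : ‖w‖ ≤ μ * ‖z‖) :
    (1 - μ) / (1 + μ) ^ 2 ≤ ⟪z, z - w⟫ / ‖z - w‖ ^ 2 := by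
  have hz2 : ‖z‖ ^ 2 ≠ 0 := by positivity
  have hd2 : 0 < ‖z - w‖ ^ 2 := by
    have := sub_ne_zero_of_norm_le_mul hz hμ hw
    positivity
  have hup : ‖z - w‖ ^ 2 ≤ (1 + μ) ^ 2 * ‖z‖ ^ 2 := by
    rw [← mul_pow]
    exact pow_le_pow_left₀ (norm_nonneg _) (norm_sub_le_one_add_mul hw) 2
  calc (1 - μ) / (1 + μ) ^ 2 = (1 - μ) * ‖z‖ ^ 2 / ((1 + μ) ^ 2 * ‖z‖ ^ 2) :=
        (mul_div_mul_right _ _ hz2).symm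
    _ ≤ ⟪z, z - w⟫ / ((1 + μ) ^ 2 * ‖z‖ ^ 2) :=
        div_le_div_of_nonneg_right (one_sub_mul_sq_le_inner_sub hw) (hd2.le.trans hup)
    _ ≤ ⟪z, z - w⟫ / ‖z - w‖ ^ 2 :=
        div_le_div_of_nonneg_left (inner_sub_pos hz hμ hw).le hd2 hup

end NormLeMul

theorem stmt_4_general {n : ℕ} (x y u v : EuclideanSpace ℝ (Fin n))
    (hxy : x ≠ y)
    (lam μ : ℝ) (hlam : 0 < lam) (hμ1 : μ < 1)
    (hls : lam * ‖u - v‖ ≤ μ * ‖x - y‖)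
    (d : EuclideanSpace ℝ (Fin n)) (hd : d = (x - y) - lam • (u - v))
    (ρ : ℝ) (hρ : ρ = (inner ℝ (x - y) d : ℝ) / ‖d‖ ^ 2) :
    d ≠ 0 ∧ ρ ≥ (1 - μ) / (1 + μ) ^ 2 := by
  subst hd hρ
  have hz : x - y ≠ 0 := sub_ne_zero.mpr hxy
  have hw : ‖lam • (u - v)‖ ≤ μ * ‖x - y‖ := by
    rwa [norm_smul, Real.norm_of_nonneg hlam.le]
  exact ⟨sub_ne_zero_of_norm_le_mul hz hμ1 hw, one_sub_div_sq_le_inner_div_norm_sq hz hμ1 hw⟩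

/-- Lemma 3.1: With x ≠ y, λ‖u − v‖ ≤ μ‖x − y‖,
d = (x − y) − λ(u − v) and ρ = ⟨x − y, d⟩/‖d‖², one has d ≠ 0 and
ρ ≥ (1 − μ)/(1 + μ)². -/
theorem stmt_4 {n : ℕ} (x y u v : EuclideanSpace ℝ (Fin n))
    (hxy : x ≠ y)
    (lam μ : ℝ) (hlam : 0 < lam) (hμ0 : 0 < μ) (hμ1 : μ < 1)
    (hls : lam * ‖u - v‖ ≤ μ * ‖x - y‖)
    (d : EuclideanSpace ℝ (Fin n)) (hd : d = (x - y) - lam • (u - v))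
    (ρ : ℝ) (hρ : ρ = (inner ℝ (x - y) d : ℝ) / ‖d‖ ^ 2) :
    d ≠ 0 ∧ ρ ≥ (1 - μ) / (1 + μ) ^ 2 :=
  stmt_4_general x y u v hxy lam μ hlam hμ1 hls d hd ρ hρ
end

section
/- Let S ⊆ ℝⁿ be a nonempty closed convex set and let 𝒜 : ℝⁿ → ℝⁿ be pseudo-monotone. Let x* ∈ S satisfy ⟨𝒜(x*), z − x*⟩ ≥ 0 for all z ∈ S. Let x ∈ ℝⁿ, λ > 0, μ ∈ (0,1), and γ ∈ (0,2). Set y = P_S(x − λ𝒜(x)), assume x ≠ y and λ‖𝒜(x) − 𝒜(y)‖ ≤ μ‖x − y‖, and define d = x − y − λ(𝒜(x) − 𝒜(y)), ρ = ⟨x − y, d⟩/‖d‖², and x⁺ = P_S(x − γλρ𝒜(y)). Then ‖x⁺ − x*‖² ≤ ‖x − x*‖² − ‖x − x⁺ − γρd‖² − (2 − γ)γρ²‖d‖². -/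
/-!
Both projections are tested through their variational characterisation
`⟪u - P_S u, w - P_S u⟫ ≤ 0`. Testing the step `x⁺ = P_S(x - γλρ 𝒜(y))` at `w = x*`, and
`y = P_S(x - λ𝒜(x))` at `w = x⁺`, and using `⟪𝒜(y), x* - y⟫ ≤ 0` (pseudo-monotonicity turns
the solution `x*` into a solution of the dual problem) gives
`⟪x - x⁺, x* - x⁺⟫ ≤ γρ ⟪d, y - x⁺⟫ = γρ ⟪x - x⁺, d⟫ - γρ²‖d‖²`,
since `ρ‖d‖² = ⟪x - y, d⟫`. Expanding the squares turns this into the claimed inequality.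
The step size `ρ` is nonnegative because `λ‖𝒜(x) - 𝒜(y)‖ ≤ ‖x - y‖`.
-/

open scoped RealInnerProductSpace

variable {E : Type*} [NormedAddCommGroup E] [InnerProductSpace ℝ E]

def IsPseudoMonotone (A : E → E) : Prop :=
  ∀ a b : E, 0 ≤ ⟪A a, b - a⟫ → 0 ≤ ⟪A b, b - a⟫

theorem IsPseudoMonotone.inner_sub_nonpos {A : E → E} (hA : IsPseudoMonotone A) {a b : E}
    (h : 0 ≤ ⟪A a, b - a⟫) : ⟪A b, a - b⟫ ≤ 0 := by
  rw [← neg_sub, inner_neg_right, neg_nonpos]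
  exact hA a b h

theorem Convex.real_inner_sub_nonpos_of_forall_norm_sub_le {S : Set E} (hS : Convex ℝ S)
    {u y : E} (hy : y ∈ S) (hmin : ∀ w ∈ S, ‖u - y‖ ≤ ‖u - w‖) {w : E} (hw : w ∈ S) :
    ⟪u - y, w - y⟫ ≤ 0 := by
  have : Nonempty S := ⟨⟨y, hy⟩⟩
  have hinf : ‖u - y‖ = ⨅ w : S, ‖u - w‖ :=
    le_antisymm (le_ciInf fun w => hmin w w.2)
      (ciInf_le ⟨0, fun _ ⟨_, h⟩ => h ▸ norm_nonneg _⟩ (⟨y, hy⟩ : S))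
  exact (norm_eq_iInf_iff_real_inner_le_zero hS hy).1 hinf w hw

theorem real_inner_sub_nonneg_of_norm_le {u v : E} (h : ‖u‖ ≤ ‖v‖) : 0 ≤ ⟪v, v - u⟫ := by
  rw [inner_sub_right, real_inner_self_eq_norm_sq]
  nlinarith [real_inner_le_norm v u, norm_nonneg v]

theorem real_inner_eq_div_norm_sq_mul (v d : E) : ⟪v, d⟫ = ⟪v, d⟫ / ‖d‖ ^ 2 * ‖d‖ ^ 2 :=
  (div_mul_cancel_of_imp fun h => by simp [norm_eq_zero.1 (pow_eq_zero_iff two_ne_zero |>.1 h)]).symm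

theorem real_inner_sub_le_of_projection_inequalities {x y xp xs a d : E} {lam t ρ : ℝ}
    (hlam : 0 ≤ lam) (ht : 0 ≤ t) (ha : ⟪a, xs - y⟫ ≤ 0)
    (hy : ⟪d - lam • a, xp - y⟫ ≤ 0) (hxp : ⟪x - (t * lam) • a - xp, xs - xp⟫ ≤ 0)
    (hd : ⟪x - y, d⟫ = ρ * ‖d‖ ^ 2) :
    ⟪x - xp, xs - xp⟫ ≤ t * ⟪x - xp, d⟫ - t * ρ * ‖d‖ ^ 2 := by
  rw [sub_right_comm, inner_sub_left, real_inner_smul_left] at hxp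
  rw [inner_sub_left, real_inner_smul_left, ← neg_sub y xp, inner_neg_right,
    inner_neg_right] at hy
  have hsplit : ⟪a, xs - xp⟫ = ⟪a, xs - y⟫ + ⟪a, y - xp⟫ := by
    rw [← inner_add_right, sub_add_sub_cancel]
  have hdx : ⟪x - xp, d⟫ = ρ * ‖d‖ ^ 2 + ⟪d, y - xp⟫ := by
    rw [← sub_add_sub_cancel x y xp, inner_add_left, hd, real_inner_comm d]
  have hdual := mul_nonpos_of_nonneg_of_nonpos (mul_nonneg ht hlam) ha
  have hlin : t * (lam * ⟪a, y - xp⟫) ≤ t * ⟪d, y - xp⟫ :=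
    mul_le_mul_of_nonneg_left (by linarith) ht
  rw [hsplit] at hxp
  rw [hdx]
  linarith

theorem norm_sub_sq_le_of_real_inner_le {x xs xp d : E} {t s : ℝ}
    (h : ⟪x - xp, xs - xp⟫ ≤ t * ⟪x - xp, d⟫ - s) :
    ‖xp - xs‖ ^ 2 ≤ ‖x - xs‖ ^ 2 - ‖x - xp - t • d‖ ^ 2 + t ^ 2 * ‖d‖ ^ 2 - 2 * s := by
  have hexp : ‖xp - xs‖ ^ 2 = ‖x - xs‖ ^ 2 - ‖x - xp‖ ^ 2 + 2 * ⟪x - xp, xs - xp⟫ := by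
    rw [show xp - xs = (x - xs) - (x - xp) by abel, show xs - xp = (x - xp) - (x - xs) by abel,
      norm_sub_sq_real, inner_sub_right (x - xp), real_inner_self_eq_norm_sq,
      real_inner_comm (x - xs)]
    ring
  rw [hexp, norm_sub_sq_real (x - xp), inner_smul_right, norm_smul, Real.norm_eq_abs, mul_pow,
    sq_abs]
  linarith

theorem stmt_6_general {n : ℕ} (S : Set (EuclideanSpace ℝ (Fin n)))
    (hScv : Convex ℝ S)
    (A : EuclideanSpace ℝ (Fin n) → EuclideanSpace ℝ (Fin n))
    (hpm : ∀ a b : EuclideanSpace ℝ (Fin n),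
      (0 : ℝ) ≤ inner ℝ (A a) (b - a) → (0 : ℝ) ≤ inner ℝ (A b) (b - a))
    (xs : EuclideanSpace ℝ (Fin n)) (hxsS : xs ∈ S)
    (hxs : ∀ z ∈ S, (0 : ℝ) ≤ inner ℝ (A xs) (z - xs))
    (x y xp : EuclideanSpace ℝ (Fin n))
    (lam μ γ : ℝ) (hlam : 0 < lam) (hμ1 : μ < 1)
    (hγ0 : 0 < γ)
    (hyS : y ∈ S) (hyproj : ∀ w ∈ S, ‖x - lam • A x - y‖ ≤ ‖x - lam • A x - w‖)
    (hls : lam * ‖A x - A y‖ ≤ μ * ‖x - y‖)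
    (d : EuclideanSpace ℝ (Fin n)) (hd : d = x - y - lam • (A x - A y))
    (ρ : ℝ) (hρ : ρ = (inner ℝ (x - y) d : ℝ) / ‖d‖ ^ 2)
    (hxpS : xp ∈ S)
    (hxpproj : ∀ w ∈ S,
      ‖x - (γ * lam * ρ) • A y - xp‖ ≤ ‖x - (γ * lam * ρ) • A y - w‖) :
    ‖xp - xs‖ ^ 2 ≤ ‖x - xs‖ ^ 2 - ‖x - xp - (γ * ρ) • d‖ ^ 2
      - (2 - γ) * γ * ρ ^ 2 * ‖d‖ ^ 2 := by
  have hstep : ‖lam • (A x - A y)‖ ≤ ‖x - y‖ := by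
    rw [norm_smul, Real.norm_of_nonneg hlam.le]
    nlinarith [norm_nonneg (x - y)]
  have hρ0 : 0 ≤ ρ := hρ ▸ div_nonneg (hd ▸ real_inner_sub_nonneg_of_norm_le hstep) (sq_nonneg _)
  have hdρ : ⟪x - y, d⟫ = ρ * ‖d‖ ^ 2 := hρ ▸ real_inner_eq_div_norm_sq_mul _ _
  have hy := hScv.real_inner_sub_nonpos_of_forall_norm_sub_le hyS hyproj hxpS
  rw [show x - lam • A x - y = d - lam • A y by rw [hd, smul_sub]; abel] at hy
  have hxp := hScv.real_inner_sub_nonpos_of_forall_norm_sub_le hxpS hxpproj hxsS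
  rw [show γ * lam * ρ = γ * ρ * lam by ring] at hxp
  have key := real_inner_sub_le_of_projection_inequalities hlam.le (by positivity)
    (IsPseudoMonotone.inner_sub_nonpos hpm (hxs y hyS)) hy hxp hdρ
  convert norm_sub_sq_le_of_real_inner_le key using 1
  ring

/-- Lemma 3.2: One step of the projection–contraction iteration
does not only not increase the distance to a solution x* of the variational
inequality, but satisfies
‖x⁺ − x*‖² ≤ ‖x − x*‖² − ‖x − x⁺ − γρd‖² − (2 − γ)γρ²‖d‖². -/
theorem stmt_6 {n : ℕ} (S : Set (EuclideanSpace ℝ (Fin n)))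
    (hSne : S.Nonempty) (hScl : IsClosed S) (hScv : Convex ℝ S)
    (A : EuclideanSpace ℝ (Fin n) → EuclideanSpace ℝ (Fin n))
    (hpm : ∀ a b : EuclideanSpace ℝ (Fin n),
      (0 : ℝ) ≤ inner ℝ (A a) (b - a) → (0 : ℝ) ≤ inner ℝ (A b) (b - a))
    (xs : EuclideanSpace ℝ (Fin n)) (hxsS : xs ∈ S)
    (hxs : ∀ z ∈ S, (0 : ℝ) ≤ inner ℝ (A xs) (z - xs))
    (x y xp : EuclideanSpace ℝ (Fin n))
    (lam μ γ : ℝ) (hlam : 0 < lam) (hμ0 : 0 < μ) (hμ1 : μ < 1)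
    (hγ0 : 0 < γ) (hγ2 : γ < 2)
    (hyS : y ∈ S) (hyproj : ∀ w ∈ S, ‖x - lam • A x - y‖ ≤ ‖x - lam • A x - w‖)
    (hxy : x ≠ y)
    (hls : lam * ‖A x - A y‖ ≤ μ * ‖x - y‖)
    (d : EuclideanSpace ℝ (Fin n)) (hd : d = x - y - lam • (A x - A y))
    (ρ : ℝ) (hρ : ρ = (inner ℝ (x - y) d : ℝ) / ‖d‖ ^ 2)
    (hxpS : xp ∈ S)
    (hxpproj : ∀ w ∈ S,
      ‖x - (γ * lam * ρ) • A y - xp‖ ≤ ‖x - (γ * lam * ρ) • A y - w‖) :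
    ‖xp - xs‖ ^ 2 ≤ ‖x - xs‖ ^ 2 - ‖x - xp - (γ * ρ) • d‖ ^ 2
      - (2 - γ) * γ * ρ ^ 2 * ‖d‖ ^ 2 :=
  stmt_6_general S hScv A hpm xs hxsS hxs x y xp lam μ γ hlam hμ1 hγ0 hyS hyproj hls d hd ρ hρ hxpS
    hxpproj
end

section
/- Let S ⊆ ℝⁿ be a nonempty closed convex set and let 𝒜 : ℝⁿ → ℝⁿ be pseudo-monotone. Let x* ∈ S satisfy ⟨𝒜(x*), z − x*⟩ ≥ 0 for all z ∈ S. Let x ∈ ℝⁿ, λ > 0, μ ∈ (0,1), and γ ∈ (0,2). Set y = P_S(x − λ𝒜(x)), assume x ≠ y and λ‖𝒜(x) − 𝒜(y)‖ ≤ μ‖x − y‖, and define d = x − y − λ(𝒜(x) − 𝒜(y)), ρ = ⟨x − y, d⟩/‖d‖², and x⁺ = P_S(x − γλρ𝒜(y)). Then ‖x⁺ − x*‖² ≤ ‖x − x*‖² − ‖x − x⁺ − γρd‖² − (2 − γ)γ · ((1 − μ)⁴/(1 + μ)⁴) · ‖x − y‖². -/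
/-!
Write `c = ⟪x - y, d⟫ = ρ‖d‖²`. The two variational inequalities of the projections defining
`y` and `x⁺`, together with `⟪𝒜 y, y - x*⟫ ≥ 0` (pseudo-monotonicity at the solution `x*`), give
`⟪x - x⁺, x⁺ - x*⟫ ≥ γρ⟪d, x⁺ - y⟫ = γρ(c - ⟪d, x - x⁺⟫)`; expanding the squares turns this
into the descent estimate with the gain `(2 - γ)γρ²‖d‖² = (2 - γ)γc²/‖d‖²`. Finally the
Lipschitz-type condition gives `c ≥ (1 - μ)‖x - y‖²` and `‖d‖ ≤ (1 + μ)‖x - y‖`, so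
`c²/‖d‖² ≥ ((1 - μ)/(1 + μ))²‖x - y‖²`, which dominates the stated `((1 - μ)/(1 + μ))⁴‖x - y‖²`.
-/

open RealInnerProductSpace

theorem div_pow_four_mul_sq_le_sq_div_sq {μ a c D : ℝ} (hμ0 : 0 ≤ μ) (hμ1 : μ < 1)
    (hc : (1 - μ) * a ^ 2 ≤ c) (hD : 0 < D) (hDa : D ≤ (1 + μ) * a) :
    (1 - μ) ^ 4 / (1 + μ) ^ 4 * a ^ 2 ≤ c ^ 2 / D ^ 2 := by
  have ha : 0 < a := by nlinarith
  have hq0 : 0 ≤ (1 - μ) / (1 + μ) := by apply div_nonneg <;> linarith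
  have hq1 : (1 - μ) / (1 + μ) ≤ 1 := by rw [div_le_one (by linarith)]; linarith
  calc (1 - μ) ^ 4 / (1 + μ) ^ 4 * a ^ 2 = ((1 - μ) / (1 + μ)) ^ 4 * a ^ 2 := by rw [div_pow]
    _ ≤ ((1 - μ) / (1 + μ)) ^ 2 * a ^ 2 :=
        mul_le_mul_of_nonneg_right (pow_le_pow_of_le_one hq0 hq1 (by norm_num)) (sq_nonneg a)
    _ = ((1 - μ) * a ^ 2) ^ 2 / ((1 + μ) * a) ^ 2 := by field_simp
    _ ≤ c ^ 2 / D ^ 2 := by gcongr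

section InnerProductSpace

variable {F : Type*} [NormedAddCommGroup F] [InnerProductSpace ℝ F]

theorem real_inner_sub_le_zero_of_forall_norm_le {S : Set F} (hS : Convex ℝ S) {u v : F}
    (hv : v ∈ S) (hmin : ∀ w ∈ S, ‖u - v‖ ≤ ‖u - w‖) {w : F} (hw : w ∈ S) :
    ⟪u - v, w - v⟫ ≤ 0 := by
  have : Nonempty S := ⟨⟨v, hv⟩⟩
  have h : ‖u - v‖ = ⨅ w : S, ‖u - w‖ :=
    le_antisymm (le_ciInf fun w => hmin w w.2)
      (ciInf_le ⟨0, Set.forall_mem_range.2 fun w : S => norm_nonneg (u - w)⟩ ⟨v, hv⟩)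
  exact (norm_eq_iInf_iff_real_inner_le_zero hS hv).1 h w hw

theorem mul_inner_le_inner_of_projections {S : Set F} (hS : Convex ℝ S) {A : F → F}
    {x y xp xs d : F} {lam γ ρ : ℝ} (hlam : 0 ≤ lam) (hγ : 0 ≤ γ) (hρ : 0 ≤ ρ)
    (hxs : xs ∈ S) (hAy : 0 ≤ ⟪A y, y - xs⟫)
    (hy : y ∈ S) (hyproj : ∀ w ∈ S, ‖x - lam • A x - y‖ ≤ ‖x - lam • A x - w‖)
    (hxp : xp ∈ S)
    (hxpproj : ∀ w ∈ S, ‖x - (γ * lam * ρ) • A y - xp‖ ≤ ‖x - (γ * lam * ρ) • A y - w‖)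
    (hd : d = x - y - lam • (A x - A y)) :
    γ * ρ * ⟪d, xp - y⟫ ≤ ⟪x - xp, xp - xs⟫ := by
  have hy_var := real_inner_sub_le_zero_of_forall_norm_le hS hy hyproj hxp
  have hxp_var := real_inner_sub_le_zero_of_forall_norm_le hS hxp hxpproj hxs
  have hd_inner : ⟪d, xp - y⟫ = ⟪x - lam • A x - y, xp - y⟫ + lam * ⟪A y, xp - y⟫ := by
    rw [hd, show x - y - lam • (A x - A y) = (x - lam • A x - y) + lam • A y by
      rw [smul_sub]; abel, inner_add_left, real_inner_smul_left]
  have hxp_split : ⟪x - (γ * lam * ρ) • A y - xp, xs - xp⟫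
      = -⟪x - xp, xp - xs⟫ + γ * lam * ρ * ⟪A y, xp - xs⟫ := by
    rw [sub_right_comm, inner_sub_left, real_inner_smul_left, ← neg_sub xp xs, inner_neg_right,
      inner_neg_right]
    ring
  have hAy_split : ⟪A y, xp - xs⟫ = ⟪A y, xp - y⟫ + ⟪A y, y - xs⟫ := by
    rw [← inner_add_right, sub_add_sub_cancel]
  have hγρ : 0 ≤ γ * ρ := mul_nonneg hγ hρ
  calc γ * ρ * ⟪d, xp - y⟫
      = γ * ρ * ⟪x - lam • A x - y, xp - y⟫ + γ * lam * ρ * ⟪A y, xp - y⟫ := by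
        rw [hd_inner]; ring
    _ ≤ γ * lam * ρ * ⟪A y, xp - xs⟫ := by
        rw [hAy_split]
        linarith [mul_nonneg (mul_nonneg hγρ hlam) hAy,
          mul_nonpos_of_nonneg_of_nonpos hγρ hy_var]
    _ ≤ ⟪x - xp, xp - xs⟫ := by linarith

theorem norm_sub_sq_le_of_mul_inner_le {x y xp xs d : F} {γ ρ : ℝ}
    (hρd : ρ * ‖d‖ ^ 2 = ⟪x - y, d⟫) (h : γ * ρ * ⟪d, xp - y⟫ ≤ ⟪x - xp, xp - xs⟫) :
    ‖xp - xs‖ ^ 2 ≤ ‖x - xs‖ ^ 2 - ‖x - xp - (γ * ρ) • d‖ ^ 2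
      - (2 - γ) * γ * (ρ ^ 2 * ‖d‖ ^ 2) := by
  have hsplit : ⟪d, xp - y⟫ = ρ * ‖d‖ ^ 2 - ⟪x - xp, d⟫ := by
    rw [hρd, show xp - y = (x - y) - (x - xp) by abel, inner_sub_right,
      real_inner_comm d, real_inner_comm d]
  have hx : ‖x - xs‖ ^ 2 = ‖x - xp‖ ^ 2 + 2 * ⟪x - xp, xp - xs⟫ + ‖xp - xs‖ ^ 2 := by
    rw [show x - xs = (x - xp) + (xp - xs) by abel, norm_add_sq_real]
  have hxd : ‖x - xp - (γ * ρ) • d‖ ^ 2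
      = ‖x - xp‖ ^ 2 - 2 * (γ * ρ) * ⟪x - xp, d⟫ + (γ * ρ) ^ 2 * ‖d‖ ^ 2 := by
    rw [norm_sub_sq_real, real_inner_smul_right, norm_smul, Real.norm_eq_abs, mul_pow, sq_abs]
    ring
  rw [hsplit] at h
  linarith

theorem one_sub_mul_norm_sq_le_inner {u v : F} {lam μ : ℝ} (hlam : 0 ≤ lam)
    (hv : lam * ‖v‖ ≤ μ * ‖u‖) :
    (1 - μ) * ‖u‖ ^ 2 ≤ ⟪u, u - lam • v⟫ := by
  have hcs : lam * ⟪u, v⟫ ≤ lam * (‖u‖ * ‖v‖) :=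
    mul_le_mul_of_nonneg_left (real_inner_le_norm u v) hlam
  rw [inner_sub_right, real_inner_smul_right, real_inner_self_eq_norm_sq]
  nlinarith [mul_le_mul_of_nonneg_left hv (norm_nonneg u)]

theorem norm_sub_smul_le {u v : F} {lam μ : ℝ} (hlam : 0 ≤ lam) (hv : lam * ‖v‖ ≤ μ * ‖u‖) :
    ‖u - lam • v‖ ≤ (1 + μ) * ‖u‖ := by
  calc ‖u - lam • v‖ ≤ ‖u‖ + lam * ‖v‖ := by
        simpa [norm_smul, abs_of_nonneg hlam] using norm_sub_le u (lam • v)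
    _ ≤ (1 + μ) * ‖u‖ := by linarith

end InnerProductSpace

theorem stmt_7_general {n : ℕ} (S : Set (EuclideanSpace ℝ (Fin n)))
    (hScv : Convex ℝ S)
    (A : EuclideanSpace ℝ (Fin n) → EuclideanSpace ℝ (Fin n))
    (hpm : ∀ a b : EuclideanSpace ℝ (Fin n),
      (0 : ℝ) ≤ inner ℝ (A a) (b - a) → (0 : ℝ) ≤ inner ℝ (A b) (b - a))
    (xs : EuclideanSpace ℝ (Fin n)) (hxsS : xs ∈ S)
    (hxs : ∀ z ∈ S, (0 : ℝ) ≤ inner ℝ (A xs) (z - xs))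
    (x y xp : EuclideanSpace ℝ (Fin n))
    (lam μ γ : ℝ) (hlam : 0 < lam) (hμ0 : 0 < μ) (hμ1 : μ < 1)
    (hγ0 : 0 < γ) (hγ2 : γ < 2)
    (hyS : y ∈ S) (hyproj : ∀ w ∈ S, ‖x - lam • A x - y‖ ≤ ‖x - lam • A x - w‖)
    (hxy : x ≠ y)
    (hls : lam * ‖A x - A y‖ ≤ μ * ‖x - y‖)
    (d : EuclideanSpace ℝ (Fin n)) (hd : d = x - y - lam • (A x - A y))
    (ρ : ℝ) (hρ : ρ = (inner ℝ (x - y) d : ℝ) / ‖d‖ ^ 2)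
    (hxpS : xp ∈ S)
    (hxpproj : ∀ w ∈ S,
      ‖x - (γ * lam * ρ) • A y - xp‖ ≤ ‖x - (γ * lam * ρ) • A y - w‖) :
    ‖xp - xs‖ ^ 2 ≤ ‖x - xs‖ ^ 2 - ‖x - xp - (γ * ρ) • d‖ ^ 2
      - (2 - γ) * γ * ((1 - μ) ^ 4 / (1 + μ) ^ 4) * ‖x - y‖ ^ 2 := by
  have hxy_pos : 0 < ‖x - y‖ := norm_pos_iff.2 (sub_ne_zero.2 hxy)
  have hc : (1 - μ) * ‖x - y‖ ^ 2 ≤ ⟪x - y, d⟫ := hd ▸ one_sub_mul_norm_sq_le_inner hlam.le hls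
  have hc_pos : 0 < ⟪x - y, d⟫ := lt_of_lt_of_le (mul_pos (by linarith) (by positivity)) hc
  have hd_pos : 0 < ‖d‖ := norm_pos_iff.2 (by rintro rfl; simp at hc_pos)
  have hρd : ρ * ‖d‖ ^ 2 = ⟪x - y, d⟫ := by rw [hρ]; field_simp
  have hρ_sq : ρ ^ 2 * ‖d‖ ^ 2 = ⟪x - y, d⟫ ^ 2 / ‖d‖ ^ 2 := by rw [hρ]; field_simp
  have hgain : (1 - μ) ^ 4 / (1 + μ) ^ 4 * ‖x - y‖ ^ 2 ≤ ρ ^ 2 * ‖d‖ ^ 2 :=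
    hρ_sq ▸ div_pow_four_mul_sq_le_sq_div_sq hμ0.le hμ1 hc hd_pos
      (hd ▸ norm_sub_smul_le hlam.le hls)
  have hdescent := norm_sub_sq_le_of_mul_inner_le hρd <|
    mul_inner_le_inner_of_projections hScv hlam.le hγ0.le (by rw [hρ]; positivity) hxsS
      (hpm xs y (hxs y hyS)) hyS hyproj hxpS hxpproj hd
  linarith [mul_le_mul_of_nonneg_left hgain (mul_nonneg (by linarith : 0 ≤ 2 - γ) hγ0.le)]

/-- inequality (13): combining Lemma 3.1, Lemma 3.2 and
‖d‖ ≥ (1 − μ)‖x − y‖ one gets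
‖x⁺ − x*‖² ≤ ‖x − x*‖² − ‖x − x⁺ − γρd‖² − (2 − γ)γ((1 − μ)⁴/(1 + μ)⁴)‖x − y‖². -/
theorem stmt_7 {n : ℕ} (S : Set (EuclideanSpace ℝ (Fin n)))
    (hSne : S.Nonempty) (hScl : IsClosed S) (hScv : Convex ℝ S)
    (A : EuclideanSpace ℝ (Fin n) → EuclideanSpace ℝ (Fin n))
    (hpm : ∀ a b : EuclideanSpace ℝ (Fin n),
      (0 : ℝ) ≤ inner ℝ (A a) (b - a) → (0 : ℝ) ≤ inner ℝ (A b) (b - a))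
    (xs : EuclideanSpace ℝ (Fin n)) (hxsS : xs ∈ S)
    (hxs : ∀ z ∈ S, (0 : ℝ) ≤ inner ℝ (A xs) (z - xs))
    (x y xp : EuclideanSpace ℝ (Fin n))
    (lam μ γ : ℝ) (hlam : 0 < lam) (hμ0 : 0 < μ) (hμ1 : μ < 1)
    (hγ0 : 0 < γ) (hγ2 : γ < 2)
    (hyS : y ∈ S) (hyproj : ∀ w ∈ S, ‖x - lam • A x - y‖ ≤ ‖x - lam • A x - w‖)
    (hxy : x ≠ y)
    (hls : lam * ‖A x - A y‖ ≤ μ * ‖x - y‖)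
    (d : EuclideanSpace ℝ (Fin n)) (hd : d = x - y - lam • (A x - A y))
    (ρ : ℝ) (hρ : ρ = (inner ℝ (x - y) d : ℝ) / ‖d‖ ^ 2)
    (hxpS : xp ∈ S)
    (hxpproj : ∀ w ∈ S,
      ‖x - (γ * lam * ρ) • A y - xp‖ ≤ ‖x - (γ * lam * ρ) • A y - w‖) :
    ‖xp - xs‖ ^ 2 ≤ ‖x - xs‖ ^ 2 - ‖x - xp - (γ * ρ) • d‖ ^ 2
      - (2 - γ) * γ * ((1 - μ) ^ 4 / (1 + μ) ^ 4) * ‖x - y‖ ^ 2 :=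
  stmt_7_general S hScv A hpm xs hxsS hxs x y xp lam μ γ hlam hμ0 hμ1 hγ0 hγ2 hyS hyproj hxy hls d
    hd ρ hρ hxpS hxpproj
end

section
/- Let S ⊆ ℝⁿ be a nonempty closed convex set and let 𝒜 : ℝⁿ → ℝⁿ be pseudo-monotone. Let x* ∈ S satisfy ⟨𝒜(x*), z − x*⟩ ≥ 0 for all z ∈ S. Let x ∈ ℝⁿ, λ > 0, μ ∈ (0,1), and γ ∈ (0,2). Set y = P_S(x − λ𝒜(x)), assume x ≠ y and λ‖𝒜(x) − 𝒜(y)‖ ≤ μ‖x − y‖, and define d = x − y − λ(𝒜(x) − 𝒜(y)), ρ = ⟨x − y, d⟩/‖d‖², and x⁺ = P_S(x − γλρ𝒜(y)). Then ‖x⁺ − x*‖ ≤ ‖x − x*‖. -/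
/-!
Write `t = γλρ` and `g = 𝒜(y)`. Projecting `x - t g` onto `S` gives
`‖x⁺ - x*‖² ≤ ‖x - x*‖² - ‖x - x⁺‖² - 2t⟨g, x⁺ - x*⟩`. Split `⟨g, x⁺ - x*⟩` at `y`:
pseudo-monotonicity at the solution `x*` makes `⟨g, y - x*⟩ ≥ 0`, and the projection
defining `y` gives `λ⟨g, x⁺ - y⟩ ≥ ⟨d, x⁺ - y⟩ = ρ‖d‖² - ⟨d, x - x⁺⟩`. Completing the square
in `‖x - x⁺ - γρ d‖²` leaves `‖x⁺ - x*‖² ≤ ‖x - x*‖² - γ(2 - γ)ρ²‖d‖²`; the Lipschitz-type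
bound with `μ < 1` makes `ρ ≥ 0`.
-/

open RealInnerProductSpace

variable {E : Type*} [NormedAddCommGroup E] [InnerProductSpace ℝ E]

lemma norm_sub_smul_sq (v g : E) (t : ℝ) :
    ‖v - t • g‖ ^ 2 = ‖v‖ ^ 2 - 2 * t * ⟪g, v⟫ + t ^ 2 * ‖g‖ ^ 2 := by
  rw [norm_sub_sq_real, real_inner_smul_right, norm_smul, mul_pow, Real.norm_eq_abs, sq_abs,
    real_inner_comm]
  ring

lemma inner_div_norm_sq_mul_norm_sq (a d : E) : ⟪a, d⟫ / ‖d‖ ^ 2 * ‖d‖ ^ 2 = ⟪a, d⟫ := by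
  rcases eq_or_ne d 0 with rfl | hd
  · simp
  · exact div_mul_cancel₀ _ (by positivity)

lemma inner_self_sub_smul_nonneg {a p : E} {lam μ : ℝ} (hlam : 0 ≤ lam)
    (hp : lam * ‖p‖ ≤ μ * ‖a‖) (hμ : μ ≤ 1) : 0 ≤ ⟪a, a - lam • p⟫ := by
  rw [inner_sub_right, real_inner_smul_right, real_inner_self_eq_norm_sq]
  have hcs : lam * ⟪a, p⟫ ≤ ‖a‖ * (lam * ‖p‖) := by
    nlinarith [real_inner_le_norm a p]
  nlinarith [mul_le_mul_of_nonneg_left hp (norm_nonneg a), norm_nonneg a]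

section ProjectionOntoConvex

variable {S : Set E} {u v : E}

lemma inner_sub_le_zero_of_forall_norm_sub_le (hS : Convex ℝ S) (hv : v ∈ S)
    (h : ∀ w ∈ S, ‖u - v‖ ≤ ‖u - w‖) : ∀ w ∈ S, ⟪u - v, w - v⟫ ≤ 0 := by
  rw [← norm_eq_iInf_iff_real_inner_le_zero hS hv]
  have : Nonempty S := ⟨⟨v, hv⟩⟩
  refine le_antisymm (le_ciInf fun w => h w w.2) ?_
  exact ciInf_le ⟨0, fun r ⟨w, hw⟩ => hw ▸ norm_nonneg _⟩ (⟨v, hv⟩ : S)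

lemma norm_sub_sq_le_of_forall_norm_sub_le (hS : Convex ℝ S) (hv : v ∈ S)
    (h : ∀ w ∈ S, ‖u - v‖ ≤ ‖u - w‖) {w : E} (hw : w ∈ S) :
    ‖v - w‖ ^ 2 ≤ ‖u - w‖ ^ 2 - ‖u - v‖ ^ 2 := by
  have hvi : ⟪u - v, w - v⟫ ≤ 0 := inner_sub_le_zero_of_forall_norm_sub_le hS hv h w hw
  have hsplit : ‖u - w‖ ^ 2 = ‖u - v‖ ^ 2 - 2 * ⟪u - v, w - v⟫ + ‖v - w‖ ^ 2 := by
    rw [show u - w = (u - v) - (w - v) by abel, norm_sub_sq_real, norm_sub_rev w v]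
  linarith

lemma norm_sub_sq_le_of_forall_norm_sub_smul_sub_le {x g : E} {t : ℝ} (hS : Convex ℝ S)
    (hv : v ∈ S) (h : ∀ w ∈ S, ‖x - t • g - v‖ ≤ ‖x - t • g - w‖) {w : E} (hw : w ∈ S) :
    ‖v - w‖ ^ 2 ≤ ‖x - w‖ ^ 2 - ‖x - v‖ ^ 2 - 2 * t * ⟪g, v - w⟫ := by
  have hproj := norm_sub_sq_le_of_forall_norm_sub_le hS hv h hw
  rw [sub_right_comm x (t • g) w, sub_right_comm x (t • g) v, norm_sub_smul_sq, norm_sub_smul_sq] at hproj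
  have hsplit : ⟪g, x - w⟫ = ⟪g, x - v⟫ + ⟪g, v - w⟫ := by
    rw [← inner_add_right, sub_add_sub_cancel]
  linear_combination hproj - 2 * t * hsplit

end ProjectionOntoConvex

theorem stmt_8_general {n : ℕ} (S : Set (EuclideanSpace ℝ (Fin n)))
    (hScv : Convex ℝ S)
    (A : EuclideanSpace ℝ (Fin n) → EuclideanSpace ℝ (Fin n))
    (hpm : ∀ a b : EuclideanSpace ℝ (Fin n),
      (0 : ℝ) ≤ inner ℝ (A a) (b - a) → (0 : ℝ) ≤ inner ℝ (A b) (b - a))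
    (xs : EuclideanSpace ℝ (Fin n)) (hxsS : xs ∈ S)
    (hxs : ∀ z ∈ S, (0 : ℝ) ≤ inner ℝ (A xs) (z - xs))
    (x y xp : EuclideanSpace ℝ (Fin n))
    (lam μ γ : ℝ) (hlam : 0 < lam) (hμ1 : μ < 1)
    (hγ0 : 0 < γ) (hγ2 : γ < 2)
    (hyS : y ∈ S) (hyproj : ∀ w ∈ S, ‖x - lam • A x - y‖ ≤ ‖x - lam • A x - w‖)
    (hls : lam * ‖A x - A y‖ ≤ μ * ‖x - y‖)
    (d : EuclideanSpace ℝ (Fin n)) (hd : d = x - y - lam • (A x - A y))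
    (ρ : ℝ) (hρ : ρ = (inner ℝ (x - y) d : ℝ) / ‖d‖ ^ 2)
    (hxpS : xp ∈ S)
    (hxpproj : ∀ w ∈ S,
      ‖x - (γ * lam * ρ) • A y - xp‖ ≤ ‖x - (γ * lam * ρ) • A y - w‖) :
    ‖xp - xs‖ ≤ ‖x - xs‖ := by
  have hρ0 : 0 ≤ ρ := hρ ▸ div_nonneg
    (hd ▸ inner_self_sub_smul_nonneg hlam.le hls hμ1.le) (sq_nonneg _)
  have hxp := norm_sub_sq_le_of_forall_norm_sub_smul_sub_le hScv hxpS hxpproj hxsS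
  have hsol : 0 ≤ ⟪A y, y - xs⟫ := hpm xs y (hxs y hyS)
  have hy : ⟪d, xp - y⟫ ≤ lam * ⟪A y, xp - y⟫ := by
    have := inner_sub_le_zero_of_forall_norm_sub_le hScv hyS hyproj xp hxpS
    rw [show d = (x - lam • A x - y) + lam • A y by rw [hd]; module, inner_add_left,
      real_inner_smul_left]
    linarith
  have hdsplit : ⟪d, xp - y⟫ = ρ * ‖d‖ ^ 2 - ⟪d, x - xp⟫ := by
    rw [hρ, inner_div_norm_sq_mul_norm_sq, real_inner_comm d (x - y), ← inner_sub_right,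
      sub_sub_sub_cancel_left]
  have hsplit : ⟪A y, xp - xs⟫ = ⟪A y, xp - y⟫ + ⟪A y, y - xs⟫ := by
    rw [← inner_add_right, sub_add_sub_cancel]
  have hsquare := norm_sub_smul_sq (x - xp) d (γ * ρ)
  have hγρ : 0 ≤ γ * ρ := by positivity
  have hsq : ‖xp - xs‖ ^ 2 ≤ ‖x - xs‖ ^ 2 := by
    rw [hdsplit] at hy
    rw [hsplit] at hxp
    linarith [mul_le_mul_of_nonneg_left hy hγρ, mul_nonneg (mul_nonneg hγρ hlam.le) hsol,
      mul_nonneg (mul_nonneg hγ0.le (sub_nonneg.2 hγ2.le)) (mul_nonneg (sq_nonneg ρ)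
        (sq_nonneg ‖d‖)), sq_nonneg ‖x - xp - (γ * ρ) • d‖]
  exact le_of_pow_le_pow_left₀ two_ne_zero (norm_nonneg _) hsq

/-- Fejér monotonicity: each iteration of Algorithm 3.1 does not
increase the distance to a solution: ‖x⁺ − x*‖ ≤ ‖x − x*‖. -/
theorem stmt_8 {n : ℕ} (S : Set (EuclideanSpace ℝ (Fin n)))
    (hSne : S.Nonempty) (hScl : IsClosed S) (hScv : Convex ℝ S)
    (A : EuclideanSpace ℝ (Fin n) → EuclideanSpace ℝ (Fin n))
    (hpm : ∀ a b : EuclideanSpace ℝ (Fin n),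
      (0 : ℝ) ≤ inner ℝ (A a) (b - a) → (0 : ℝ) ≤ inner ℝ (A b) (b - a))
    (xs : EuclideanSpace ℝ (Fin n)) (hxsS : xs ∈ S)
    (hxs : ∀ z ∈ S, (0 : ℝ) ≤ inner ℝ (A xs) (z - xs))
    (x y xp : EuclideanSpace ℝ (Fin n))
    (lam μ γ : ℝ) (hlam : 0 < lam) (hμ0 : 0 < μ) (hμ1 : μ < 1)
    (hγ0 : 0 < γ) (hγ2 : γ < 2)
    (hyS : y ∈ S) (hyproj : ∀ w ∈ S, ‖x - lam • A x - y‖ ≤ ‖x - lam • A x - w‖)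
    (hxy : x ≠ y)
    (hls : lam * ‖A x - A y‖ ≤ μ * ‖x - y‖)
    (d : EuclideanSpace ℝ (Fin n)) (hd : d = x - y - lam • (A x - A y))
    (ρ : ℝ) (hρ : ρ = (inner ℝ (x - y) d : ℝ) / ‖d‖ ^ 2)
    (hxpS : xp ∈ S)
    (hxpproj : ∀ w ∈ S,
      ‖x - (γ * lam * ρ) • A y - xp‖ ≤ ‖x - (γ * lam * ρ) • A y - w‖) :
    ‖xp - xs‖ ≤ ‖x - xs‖ :=
  stmt_8_general S hScv A hpm xs hxsS hxs x y xp lam μ γ hlam hμ1 hγ0 hγ2 hyS hyproj hls d hd ρ hρ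
    hxpS hxpproj
end

section
/- Let f : ℝⁿ → ℝ be a convex, continuously differentiable function whose gradient ∇f is Lipschitz continuous with constant L_f > 0, let 𝔠 = {x ∈ ℝⁿ : f(x) ≤ 0}, and suppose there exists x̂ ∈ ℝⁿ with f(x̂) < 0 (Slater's condition). Then for every x ∈ 𝔠, one has (1/L_f²)‖∇f(x)‖² − (2/L_f)f(x) > 0; equivalently, the radius r = √((1/L_f²)‖∇f(x)‖² − (2/L_f)f(x)) of the moving ball 𝔅(x) is strictly positive, so Slater's condition holds for 𝔅(x). -/
/-!
If `f x < 0`, the term `-(2/L_f) f x` of the squared radius is already positive. If `f x = 0`,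
the Slater point gives `f x̂ < f x`, so `x` does not minimize the convex function `f`. Since a
critical point of a convex function is a global minimizer (first-order characterization
`f y ≥ f x + ⟪∇f x, y - x⟫`), `∇f x ≠ 0` and the term `‖∇f x‖² / L_f²` is positive.
-/

open Set

theorem ConvexOn.le_add_fderiv_apply_sub
    {E : Type*} [NormedAddCommGroup E] [NormedSpace ℝ E] {f : E → ℝ} {f' : E →L[ℝ] ℝ} {x : E}
    (hconv : ConvexOn ℝ univ f) (hf : HasFDerivAt f f' x) (y : E) :
    f x + f' (y - x) ≤ f y := by
  have hline : ConvexOn ℝ univ (f ∘ AffineMap.lineMap (k := ℝ) x y) := by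
    simpa using hconv.comp_affineMap (AffineMap.lineMap x y)
  have hderiv : HasDerivAt (f ∘ AffineMap.lineMap (k := ℝ) x y) (f' (y - x)) 0 :=
    hf.comp_hasDerivAt_of_eq 0 AffineMap.hasDerivAt_lineMap (AffineMap.lineMap_apply_zero x y).symm
  have hslope := hline.le_slope_of_hasDerivAt (mem_univ 0) (mem_univ 1) zero_lt_one hderiv
  rw [slope_def_field] at hslope
  simp only [Function.comp_apply, AffineMap.lineMap_apply_zero, AffineMap.lineMap_apply_one,
    sub_zero, div_one] at hslope
  linarith

theorem ConvexOn.isMinOn_univ_of_gradient_eq_zero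
    {F : Type*} [NormedAddCommGroup F] [InnerProductSpace ℝ F] [CompleteSpace F] {f : F → ℝ} {x : F}
    (hconv : ConvexOn ℝ univ f) (hf : DifferentiableAt ℝ f x) (hgrad : gradient f x = 0) :
    IsMinOn f univ x := fun y _ => by
  simpa [hgrad] using hconv.le_add_fderiv_apply_sub hf.hasGradientAt.hasFDerivAt y

theorem movingBall_sqRadius_pos {F : Type*} [NormedAddCommGroup F] {L c : ℝ} {g : F}
    (hL : 0 < L) (hc : c ≤ 0) (h : c < 0 ∨ g ≠ 0) :
    0 < (1 / L ^ 2) * ‖g‖ ^ 2 - (2 / L) * c := by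
  have hgrad_term : 0 ≤ (1 / L ^ 2) * ‖g‖ ^ 2 := by positivity
  have hval_term : 0 ≤ (2 / L) * -c := mul_nonneg (by positivity) (neg_nonneg.2 hc)
  rcases h with hneg | hg
  · have : 0 < (2 / L) * -c := mul_pos (by positivity) (neg_pos.2 hneg)
    linarith
  · have : 0 < (1 / L ^ 2) * ‖g‖ ^ 2 := mul_pos (by positivity) (pow_pos (norm_pos_iff.2 hg) 2)
    linarith

theorem stmt_13_general {n : ℕ} (f : EuclideanSpace ℝ (Fin n) → ℝ)
    (hconv : ConvexOn ℝ Set.univ f) (hf : ContDiff ℝ 1 f)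
    (Lf : ℝ) (hLf : 0 < Lf)
    (C : Set (EuclideanSpace ℝ (Fin n)))
    (hC : C = {z : EuclideanSpace ℝ (Fin n) | f z ≤ 0})
    (hslater : ∃ xhat : EuclideanSpace ℝ (Fin n), f xhat < 0)
    (x : EuclideanSpace ℝ (Fin n)) (hx : x ∈ C) :
    0 < (1 / Lf ^ 2) * ‖gradient f x‖ ^ 2 - (2 / Lf) * f x ∧
    0 < Real.sqrt ((1 / Lf ^ 2) * ‖gradient f x‖ ^ 2 - (2 / Lf) * f x) := by
  obtain ⟨xhat, hxhat⟩ := hslater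
  have hfx : f x ≤ 0 := by rwa [hC] at hx
  have hnondegenerate : f x < 0 ∨ gradient f x ≠ 0 := by
    rcases hfx.lt_or_eq with hneg | hzero
    · exact .inl hneg
    · refine .inr fun hgrad => ?_
      have hmin := hconv.isMinOn_univ_of_gradient_eq_zero (hf.differentiable one_ne_zero x) hgrad
      linarith [isMinOn_univ_iff.1 hmin xhat]
  have hsq := movingBall_sqRadius_pos hLf hfx hnondegenerate
  exact ⟨hsq, Real.sqrt_pos.mpr hsq⟩

/-- Lemma 2.3 (3) / Remark (c): under Slater's condition, for
every x ∈ 𝔠 the squared radius (1/L_f²)‖∇f(x)‖² − (2/L_f)f(x) of the moving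
ball 𝔅(x) is strictly positive, hence r = √(…) > 0 and Slater's condition
holds for 𝔅(x). -/
theorem stmt_13 {n : ℕ} (f : EuclideanSpace ℝ (Fin n) → ℝ)
    (hconv : ConvexOn ℝ Set.univ f) (hf : ContDiff ℝ 1 f)
    (Lf : ℝ) (hLf : 0 < Lf)
    (hlip : ∀ a b : EuclideanSpace ℝ (Fin n),
      ‖gradient f a - gradient f b‖ ≤ Lf * ‖a - b‖)
    (C : Set (EuclideanSpace ℝ (Fin n)))
    (hC : C = {z : EuclideanSpace ℝ (Fin n) | f z ≤ 0})
    (hslater : ∃ xhat : EuclideanSpace ℝ (Fin n), f xhat < 0)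
    (x : EuclideanSpace ℝ (Fin n)) (hx : x ∈ C) :
    0 < (1 / Lf ^ 2) * ‖gradient f x‖ ^ 2 - (2 / Lf) * f x ∧
    0 < Real.sqrt ((1 / Lf ^ 2) * ‖gradient f x‖ ^ 2 - (2 / Lf) * f x) :=
  stmt_13_general f hconv hf Lf hLf C hC hslater x hx
end

section
/- Let f : ℝⁿ → ℝ be a convex, continuously differentiable function, let 𝔠 = {x ∈ ℝⁿ : f(x) ≤ 0}, suppose there exists x̂ ∈ ℝⁿ with f(x̂) < 0 (Slater's condition), and let 𝒜 : ℝⁿ → ℝⁿ. Then for x* ∈ 𝔠, x* ∈ VI(𝔠, 𝒜) if and only if either 𝒜(x*) = 0, or f(x*) = 0 (i.e., x* lies on the boundary of 𝔠) and there exists η > 0 such that 𝒜(x*) = −η∇f(x*). -/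
/-!
A solution of the variational inequality is a point where `-𝒜 x*` lies in the normal cone
of `𝔠`. At an interior point that cone is `{0}`. At a point with `f x* = 0`, every direction
`d` with `⟪∇f x*, d⟫ < 0` is a descent direction of `f`, hence points into `𝔠`, so `𝒜 x*` is
nonnegative on that open half-space and, by continuity, on its closure. By Slater's condition
and the gradient inequality `f z ≥ f x* + ⟪∇f x*, z - x*⟫`, `∇f x* ≠ 0`, and then the only
vectors nonnegative on the half-space `{d | ⟪∇f x*, d⟫ ≤ 0}` are the `-η ∇f x*`, `η ≥ 0`.
The converse is the gradient inequality again.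
-/
open Filter Topology Set

section Calculus

variable {E : Type*} [NormedAddCommGroup E] [NormedSpace ℝ E] {f : E → ℝ} {x : E}

lemma DifferentiableAt.hasDerivAt_add_smul (hf : DifferentiableAt ℝ f x) (d : E) :
    HasDerivAt (fun t : ℝ => f (x + t • d)) (fderiv ℝ f x d) 0 := by
  have hline : HasDerivAt (fun t : ℝ => x + t • d) d 0 := by
    simpa using ((hasDerivAt_id (0 : ℝ)).smul_const d).const_add x
  have hfx : HasFDerivAt f (fderiv ℝ f x) (x + (0 : ℝ) • d) := by simpa using hf.hasFDerivAt
  exact hfx.comp_hasDerivAt 0 hline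

lemma ConvexOn.fderiv_apply_sub_le {s : Set E} (hconv : ConvexOn ℝ s f) (hx : x ∈ s) {y : E}
    (hy : y ∈ s) (hf : DifferentiableAt ℝ f x) : fderiv ℝ f x (y - x) ≤ f y - f x := by
  have hcomp : (fun t : ℝ => f (x + t • (y - x))) = f ∘ AffineMap.lineMap x y := by
    ext t
    simp [AffineMap.lineMap_apply_module', add_comm]
  have := (hconv.comp_affineMap (AffineMap.lineMap x y)).le_slope_of_hasDerivAt (x := 0) (y := 1)
    (by simpa) (by simpa) one_pos (hcomp ▸ hf.hasDerivAt_add_smul (y - x))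
  simpa [slope_def_field] using this

lemma eventually_lt_of_fderiv_apply_neg (hf : DifferentiableAt ℝ f x) {d : E}
    (hd : fderiv ℝ f x d < 0) : ∀ᶠ t : ℝ in 𝓝[>] 0, f (x + t • d) < f x := by
  have hslope := (hasDerivAt_iff_tendsto_slope.mp (hf.hasDerivAt_add_smul d)).eventually
    (eventually_lt_nhds hd)
  filter_upwards [hslope.filter_mono (nhdsGT_le_nhdsNE 0), self_mem_nhdsWithin] with t ht ht0
  simpa using (slope_neg_iff_of_le (le_of_lt ht0)).mp ht

end Calculus

section InnerProduct

variable {E : Type*} [NormedAddCommGroup E] [InnerProductSpace ℝ E]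

lemma inner_nonneg_of_forall_inner_neg {a g : E} (hg : g ≠ 0)
    (h : ∀ d, inner ℝ g d < 0 → 0 ≤ inner ℝ a d) {d : E} (hd : inner ℝ g d ≤ 0) :
    0 ≤ inner ℝ a d := by
  have hgg : 0 < inner ℝ g g := real_inner_self_pos.mpr hg
  have hlim : Tendsto (fun ε : ℝ => inner ℝ a (d - ε • g)) (𝓝[>] 0) (𝓝 (inner ℝ a d)) := by
    have hcont : Continuous (fun ε : ℝ => inner ℝ a (d - ε • g)) := by fun_prop
    simpa using (hcont.tendsto 0).mono_left nhdsWithin_le_nhds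
  refine ge_of_tendsto hlim (eventually_nhdsWithin_of_forall fun ε hε => h _ ?_)
  rw [inner_sub_right, real_inner_smul_right]
  nlinarith [mem_Ioi.mp hε]

lemma exists_pos_eq_neg_smul_of_forall_inner_neg {a g : E} (ha : a ≠ 0) (hg : g ≠ 0)
    (h : ∀ d, inner ℝ g d < 0 → 0 ≤ inner ℝ a d) : ∃ η : ℝ, 0 < η ∧ a = -η • g := by
  have hperp : a ∈ (ℝ ∙ g)ᗮᗮ := by
    refine Submodule.mem_orthogonal' _ _ |>.mpr fun w hw => ?_
    rw [Submodule.mem_orthogonal_singleton_iff_inner_right] at hw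
    have h₁ := inner_nonneg_of_forall_inner_neg hg h hw.le
    have h₂ := inner_nonneg_of_forall_inner_neg hg h (d := -w) (by simp [hw])
    rw [inner_neg_right] at h₂
    linarith
  rw [Submodule.orthogonal_orthogonal, Submodule.mem_span_singleton] at hperp
  obtain ⟨c, rfl⟩ := hperp
  have hc : c < 0 := by
    have hgg : 0 < inner ℝ g g := real_inner_self_pos.mpr hg
    have hc0 : c ≠ 0 := by rintro rfl; simp at ha
    have := h (-g) (by simpa using hgg)
    rw [inner_neg_right, real_inner_smul_left] at this
    exact lt_of_le_of_ne (by nlinarith) hc0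
  exact ⟨-c, by linarith, by simp⟩

lemma inner_nonneg_of_eventually_add_smul_mem {C : Set E} {a x d : E}
    (hVI : ∀ z ∈ C, 0 ≤ inner ℝ a (z - x)) (hmem : ∀ᶠ t : ℝ in 𝓝[>] 0, x + t • d ∈ C) :
    0 ≤ inner ℝ a d := by
  obtain ⟨t, ht, htpos⟩ := (hmem.and self_mem_nhdsWithin).exists
  have := hVI _ ht
  rw [add_sub_cancel_left, real_inner_smul_right] at this
  exact (mul_nonneg_iff_of_pos_left htpos).mp this

lemma eq_zero_of_forall_inner_sub_nonneg {C : Set E} {a x : E}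
    (hVI : ∀ z ∈ C, 0 ≤ inner ℝ a (z - x)) (hx : C ∈ 𝓝 x) : a = 0 := by
  have hline : Tendsto (fun t : ℝ => x + t • (-a)) (𝓝 0) (𝓝 x) := by
    have hcont : Continuous (fun t : ℝ => x + t • (-a)) := by fun_prop
    simpa using hcont.tendsto 0
  have := inner_nonneg_of_eventually_add_smul_mem hVI
    ((hline.eventually hx).filter_mono nhdsWithin_le_nhds)
  rwa [inner_neg_right, neg_nonneg, real_inner_self_nonpos] at this

end InnerProduct

/-- Lemma 2.5: KKT-type characterization. With Slater's
condition, x* ∈ 𝔠 solves VI(𝔠, 𝒜) iff 𝒜(x*) = 0, or f(x*) = 0 and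
𝒜(x*) = −η∇f(x*) for some η > 0. -/
theorem stmt_14 {n : ℕ} (f : EuclideanSpace ℝ (Fin n) → ℝ)
    (hconv : ConvexOn ℝ Set.univ f) (hf : ContDiff ℝ 1 f)
    (C : Set (EuclideanSpace ℝ (Fin n)))
    (hC : C = {z : EuclideanSpace ℝ (Fin n) | f z ≤ 0})
    (hslater : ∃ xhat : EuclideanSpace ℝ (Fin n), f xhat < 0)
    (A : EuclideanSpace ℝ (Fin n) → EuclideanSpace ℝ (Fin n))
    (xs : EuclideanSpace ℝ (Fin n)) (hxs : xs ∈ C) :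
    ((∀ z ∈ C, (0 : ℝ) ≤ inner ℝ (A xs) (z - xs)) ↔
      (A xs = 0 ∨ (f xs = 0 ∧ ∃ η : ℝ, 0 < η ∧ A xs = -η • gradient f xs))) := by
  subst hC
  have hdiff : DifferentiableAt ℝ f xs := (hf.differentiable one_ne_zero).differentiableAt
  have hgrad (z) : inner ℝ (gradient f xs) (z - xs) ≤ f z - f xs := by
    simpa [inner_gradient_left] using hconv.fderiv_apply_sub_le (mem_univ xs) (mem_univ z) hdiff
  constructor
  · intro hVI
    by_cases ha : A xs = 0
    · exact Or.inl ha
    have hfxs : f xs = 0 := by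
      refine le_antisymm hxs (not_lt.mp fun hlt => ha (eq_zero_of_forall_inner_sub_nonneg hVI ?_))
      exact mem_of_superset ((isOpen_lt hf.continuous continuous_const).mem_nhds hlt)
        (ofPred_subset_ofPred.mpr fun _ => le_of_lt)
    obtain ⟨xhat, hxhat⟩ := hslater
    have hg : gradient f xs ≠ 0 := by
      intro h0
      have := hgrad xhat
      rw [h0, inner_zero_left, hfxs] at this
      linarith
    refine Or.inr ⟨hfxs, exists_pos_eq_neg_smul_of_forall_inner_neg ha hg fun d hd => ?_⟩
    refine inner_nonneg_of_eventually_add_smul_mem hVI ?_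
    filter_upwards [eventually_lt_of_fderiv_apply_neg hdiff (by rwa [← inner_gradient_left])]
      with t ht
    exact (ht.trans_eq hfxs).le
  · rintro (ha | ⟨hfxs, η, hη, ha⟩) z hz
    · simp [ha]
    · rw [ha, real_inner_smul_left]
      nlinarith [hgrad z, show f z ≤ 0 from hz]
end

section
/- Let S ⊆ ℝⁿ be a nonempty closed convex set, let 𝒜 : ℝⁿ → ℝⁿ be L-Lipschitz continuous with L > 0, let x ∈ ℝⁿ, and let μ, δ ∈ (0,1) and σ > 0. Then: (i) there exists a nonnegative integer k such that, setting λ = σδᵏ and y = P_S(x − λ𝒜(x)), one has λ‖𝒜(x) − 𝒜(y)‖ ≤ μ‖x − y‖; and (ii) if k₀ is the smallest such nonnegative integer, then the step size λ₀ = σδ^{k₀} satisfies min{σ, μδ/L} ≤ λ₀ ≤ σ. -/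
/-- Remark (b): the Armijo-type line search is well defined:
(i) some k works; (ii) if k₀ is the smallest such k, then
min{σ, μδ/L} ≤ σδ^{k₀} ≤ σ. The projection P_S is encoded by the map `P`
together with its variational characterization `hP`. -/
theorem stmt_15 {n : ℕ} (S : Set (EuclideanSpace ℝ (Fin n)))
    (hSne : S.Nonempty) (hScl : IsClosed S) (hScv : Convex ℝ S)
    (A : EuclideanSpace ℝ (Fin n) → EuclideanSpace ℝ (Fin n))
    (L : ℝ) (hL : 0 < L)
    (hlip : ∀ a b : EuclideanSpace ℝ (Fin n), ‖A a - A b‖ ≤ L * ‖a - b‖)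
    (x : EuclideanSpace ℝ (Fin n))
    (μ δ σ : ℝ) (hμ0 : 0 < μ) (hμ1 : μ < 1) (hδ0 : 0 < δ) (hδ1 : δ < 1)
    (hσ : 0 < σ)
    (P : EuclideanSpace ℝ (Fin n) → EuclideanSpace ℝ (Fin n))
    (hP : ∀ z : EuclideanSpace ℝ (Fin n),
      P z ∈ S ∧ ∀ w ∈ S, ‖z - P z‖ ≤ ‖z - w‖) :
    (∃ k : ℕ,
      σ * δ ^ k * ‖A x - A (P (x - (σ * δ ^ k) • A x))‖ ≤
        μ * ‖x - P (x - (σ * δ ^ k) • A x)‖) ∧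
    (∀ k₀ : ℕ,
      (σ * δ ^ k₀ * ‖A x - A (P (x - (σ * δ ^ k₀) • A x))‖ ≤
        μ * ‖x - P (x - (σ * δ ^ k₀) • A x)‖) →
      (∀ j < k₀,
        ¬ (σ * δ ^ j * ‖A x - A (P (x - (σ * δ ^ j) • A x))‖ ≤
          μ * ‖x - P (x - (σ * δ ^ j) • A x)‖)) →
      min σ (μ * δ / L) ≤ σ * δ ^ k₀ ∧ σ * δ ^ k₀ ≤ σ) := by
  -- Key: if λ := σ δ^k satisfies λ * L ≤ μ, the test passes, by Lipschitzness.
  have key : ∀ k : ℕ, σ * δ ^ k * L ≤ μ →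
      σ * δ ^ k * ‖A x - A (P (x - (σ * δ ^ k) • A x))‖ ≤
        μ * ‖x - P (x - (σ * δ ^ k) • A x)‖ := by
    intro k hk
    set y := P (x - (σ * δ ^ k) • A x)
    have hlam : 0 ≤ σ * δ ^ k := le_of_lt (by positivity)
    calc σ * δ ^ k * ‖A x - A y‖ ≤ σ * δ ^ k * (L * ‖x - y‖) := by
          exact mul_le_mul_of_nonneg_left (hlip x y) hlam
      _ = (σ * δ ^ k * L) * ‖x - y‖ := by ring
      _ ≤ μ * ‖x - y‖ := mul_le_mul_of_nonneg_right hk (norm_nonneg _)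
  constructor
  · obtain ⟨k, hk⟩ := exists_pow_lt_of_lt_one
      (show (0:ℝ) < μ / (σ * L) by positivity) hδ1
    refine ⟨k, key k ?_⟩
    have : δ ^ k * (σ * L) < μ / (σ * L) * (σ * L) :=
      mul_lt_mul_of_pos_right hk (by positivity)
    rw [div_mul_cancel₀ _ (by positivity : (σ*L) ≠ 0)] at this
    nlinarith
  · intro k₀ hk₀ hmin
    constructor
    · rcases Nat.eq_zero_or_pos k₀ with h | h
      · subst h; simpa using min_le_left σ (μ * δ / L)
      · -- j = k₀ - 1 fails, hence σ δ^(k₀-1) * L > μ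
        have hj := hmin (k₀ - 1) (Nat.sub_lt h one_pos)
        have hfail : μ < σ * δ ^ (k₀ - 1) * L := by
          by_contra hle
          exact hj (key _ (not_lt.mp hle))
        have hpow : δ ^ k₀ = δ ^ (k₀ - 1) * δ := by
          rw [← pow_succ, Nat.sub_add_cancel h]
        refine le_trans (min_le_right _ _) ?_
        rw [div_le_iff₀ hL, hpow]
        nlinarith [pow_pos hδ0 (k₀ - 1)]
    · have : δ ^ k₀ ≤ 1 := pow_le_one₀ hδ0.le hδ1.le
      nlinarith
end

section
/- Let 𝔇 ⊆ ℝⁿ be a nonempty closed convex set, let r > 0, and let 𝔊 = 𝔇 + B̄(0, r) be the Minkowski sum of 𝔇 with the closed ball of radius r centered at the origin. Then 𝔊 is a nonempty closed convex subset of ℝⁿ, and for every x ∈ ℝⁿ: if ‖x − P_𝔇(x)‖ ≤ r then P_𝔊(x) = x, and otherwise P_𝔊(x) = P_𝔇(x) + r·(x − P_𝔇(x))/‖x − P_𝔇(x)‖. -/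
open Pointwise

/-- Uniqueness of the metric projection onto a convex set. -/
lemma proj_unique_aux {E : Type*} [NormedAddCommGroup E] [InnerProductSpace ℝ E]
    {G : Set E} (hGcv : Convex ℝ G) {x y₁ y₂ : E}
    (h₁ : y₁ ∈ G) (h₂ : y₂ ∈ G)
    (m₁ : ∀ w ∈ G, ‖x - y₁‖ ≤ ‖x - w‖)
    (m₂ : ∀ w ∈ G, ‖x - y₂‖ ≤ ‖x - w‖) : y₁ = y₂ := by
  have hd : ‖x - y₁‖ = ‖x - y₂‖ := le_antisymm (m₁ _ h₂) (m₂ _ h₁)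
  set m : E := (1/2 : ℝ) • y₁ + (1/2 : ℝ) • y₂ with hm_def
  have hm : m ∈ G := hGcv h₁ h₂ (by norm_num) (by norm_num) (by norm_num)
  have hxm : x - m = (1/2 : ℝ) • ((x - y₁) + (x - y₂)) := by
    rw [hm_def]
    rw [smul_add, smul_sub, smul_sub]
    module
  have hmin : ‖x - y₁‖ ≤ ‖x - m‖ := m₁ _ hm
  have hnorm : ‖x - m‖ = (1/2 : ℝ) * ‖(x - y₁) + (x - y₂)‖ := by
    rw [hxm, norm_smul]
    norm_num
  have hpar := parallelogram_law_with_norm ℝ (x - y₁) (x - y₂)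
  have hsub : (x - y₁) - (x - y₂) = y₂ - y₁ := by abel
  rw [hsub] at hpar
  have hzero : ‖y₂ - y₁‖ ^ 2 ≤ 0 := by
    have h1 : 2 * ‖x - y₁‖ ≤ ‖(x - y₁) + (x - y₂)‖ := by
      rw [hnorm] at hmin; linarith
    have h2 : (0:ℝ) ≤ ‖x - y₁‖ := norm_nonneg _
    nlinarith [hpar, hd]
  have : ‖y₂ - y₁‖ = 0 := by
    have := sq_nonneg ‖y₂ - y₁‖
    nlinarith [norm_nonneg (y₂ - y₁)]
  have : y₂ - y₁ = 0 := norm_eq_zero.mp this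
  linear_combination (norm := abel1) -this

/-- Lemma 2.2: for 𝔊 = 𝔇 + B̄(0, r), 𝔊 is nonempty, closed and
convex, and the projection onto 𝔊 has the stated explicit formula in terms of
the projection onto 𝔇. The projections P_𝔇 and P_𝔊 are encoded by maps `PD`
and `PG` with their variational characterizations. -/
theorem stmt_16 {n : ℕ} (D : Set (EuclideanSpace ℝ (Fin n)))
    (hDne : D.Nonempty) (hDcl : IsClosed D) (hDcv : Convex ℝ D)
    (r : ℝ) (hr : 0 < r)
    (G : Set (EuclideanSpace ℝ (Fin n)))
    (hG : G = D + Metric.closedBall (0 : EuclideanSpace ℝ (Fin n)) r)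
    (PD : EuclideanSpace ℝ (Fin n) → EuclideanSpace ℝ (Fin n))
    (hPD : ∀ z : EuclideanSpace ℝ (Fin n),
      PD z ∈ D ∧ ∀ w ∈ D, ‖z - PD z‖ ≤ ‖z - w‖)
    (PG : EuclideanSpace ℝ (Fin n) → EuclideanSpace ℝ (Fin n))
    (hPG : ∀ z : EuclideanSpace ℝ (Fin n),
      PG z ∈ G ∧ ∀ w ∈ G, ‖z - PG z‖ ≤ ‖z - w‖) :
    G.Nonempty ∧ IsClosed G ∧ Convex ℝ G ∧
    ∀ x : EuclideanSpace ℝ (Fin n),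
      (‖x - PD x‖ ≤ r → PG x = x) ∧
      (¬ ‖x - PD x‖ ≤ r →
        PG x = PD x + (r / ‖x - PD x‖) • (x - PD x)) := by
  -- membership characterization of G
  have hmemG : ∀ z : EuclideanSpace ℝ (Fin n),
      z ∈ G ↔ ∃ d ∈ D, ‖z - d‖ ≤ r := by
    intro z
    rw [hG]
    constructor
    · rintro ⟨d, hd, b, hb, rfl⟩
      refine ⟨d, hd, ?_⟩
      simpa [dist_eq_norm] using Metric.mem_closedBall.mp hb
    · rintro ⟨d, hd, hzd⟩
      exact ⟨d, hd, z - d, by simpa [dist_eq_norm] using hzd, add_sub_cancel d z⟩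
  -- key: z ∈ G ↔ ‖z - PD z‖ ≤ r
  have hkey : ∀ z : EuclideanSpace ℝ (Fin n), z ∈ G ↔ ‖z - PD z‖ ≤ r := by
    intro z
    rw [hmemG]
    constructor
    · rintro ⟨d, hd, hzd⟩
      exact le_trans ((hPD z).2 d hd) hzd
    · intro h
      exact ⟨PD z, (hPD z).1, h⟩
  -- nonempty
  have hGne : G.Nonempty := by
    obtain ⟨d, hd⟩ := hDne
    exact ⟨d, (hmemG d).mpr ⟨d, hd, by simp [hr.le]⟩⟩
  -- closed
  have hGcl : IsClosed G := by
    apply isClosed_of_closure_subset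
    intro z hz
    rw [hkey]
    refine le_of_forall_pos_le_add ?_
    intro ε hε
    obtain ⟨w, hwG, hzw⟩ := Metric.mem_closure_iff.mp hz ε hε
    obtain ⟨d, hd, hwd⟩ := (hmemG w).mp hwG
    calc ‖z - PD z‖ ≤ ‖z - d‖ := (hPD z).2 d hd
      _ ≤ ‖z - w‖ + ‖w - d‖ := by
          have : z - d = (z - w) + (w - d) := by abel
          rw [this]; exact norm_add_le _ _
      _ ≤ ε + r := by
          have : ‖z - w‖ ≤ ε := by
            rw [← dist_eq_norm]; exact le_of_lt hzw
          linarith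
      _ = r + ε := by ring
  -- convex
  have hGcv : Convex ℝ G := by
    rw [hG]
    exact hDcv.add (convex_closedBall _ _)
  refine ⟨hGne, hGcl, hGcv, ?_⟩
  intro x
  constructor
  · intro hle
    have hxG : x ∈ G := (hkey x).mpr hle
    have := (hPG x).2 x hxG
    simp only [sub_self, norm_zero] at this
    have h0 : ‖x - PG x‖ = 0 := le_antisymm this (norm_nonneg _)
    have : x - PG x = 0 := norm_eq_zero.mp h0
    linear_combination (norm := abel1) -this
  · intro hgt
    push_neg at hgt
    set p := PD x with hp
    set u := x - p with hu_def
    have hu_pos : 0 < ‖u‖ := lt_trans hr hgt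
    set y := p + (r / ‖u‖) • u with hy_def
    -- ‖x - y‖ = ‖u‖ - r
    have hxy : x - y = (1 - r / ‖u‖) • u := by
      rw [hy_def, hu_def]
      rw [sub_smul, one_smul]
      module
    have hxynorm : ‖x - y‖ = ‖u‖ - r := by
      rw [hxy, norm_smul, Real.norm_eq_abs, abs_of_nonneg, sub_mul, one_mul,
        div_mul_cancel₀ _ (ne_of_gt hu_pos)]
      rw [sub_nonneg, div_le_one hu_pos]
      exact hgt.le
    -- y ∈ G
    have hyG : y ∈ G := by
      rw [hmemG]
      refine ⟨p, (hPD x).1, ?_⟩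
      have : y - p = (r / ‖u‖) • u := by rw [hy_def]; abel
      rw [this, norm_smul, Real.norm_eq_abs, abs_of_nonneg (by positivity),
        div_mul_cancel₀ _ (ne_of_gt hu_pos)]
    -- y minimizes distance to x over G
    have hymin : ∀ w ∈ G, ‖x - y‖ ≤ ‖x - w‖ := by
      intro w hw
      obtain ⟨d, hd, b, hb, rfl⟩ := by rw [hG] at hw; exact hw
      have hbn : ‖b‖ ≤ r := by simpa [dist_eq_norm] using Metric.mem_closedBall.mp hb
      have h1 : ‖x - p‖ ≤ ‖x - d‖ := (hPD x).2 d hd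
      have h2 : ‖x - d‖ - ‖b‖ ≤ ‖(x - d) - b‖ := by
        have := norm_sub_norm_le (x - d) b
        linarith [this]
      have h3 : x - (d + b) = (x - d) - b := by abel
      rw [hxynorm, h3]
      calc ‖u‖ - r ≤ ‖x - d‖ - ‖b‖ := by
            rw [hu_def]; linarith
        _ ≤ ‖(x - d) - b‖ := h2
    exact proj_unique_aux hGcv (hPG x).1 hyG (hPG x).2 hymin
end
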